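/- (Fischer decomposition in superspace.) Assume M ∉ {0, −2, −4, …}. Then for every integer k ≥ 0, the space 𝒫_k is the internal direct sum 𝒫_k = ⊕_{i=0}^{⌊k/2⌋} x^{2i} ℋ_{k−2i} of the subspaces x^{2i} ℋ_{k−2i} = {x^{2i} H : H ∈ ℋ_{k−2i}}. -/

import Mathlib

set_option synthInstance.maxHeartbeats 1000000
set_option maxHeartbeats 1000000
open scoped TensorProduct
open MvPolynomial

noncomputable section

variable (m n : ℕ)

/-- The Grassmann algebra Λ_{2n} on `2n` anticommuting generators. -/
abbrev Grass (n : ℕ) := ExteriorAlgebra ℝ (Fin (2*n) → ℝ)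

/-- The algebra of super-polynomials 𝒫 = ℝ[x_1,…,x_m] ⊗ Λ_{2n}. -/
abbrev SuperPoly (m n : ℕ) := MvPolynomial (Fin m) ℝ ⊗[ℝ] Grass n

/-- The fermionic generator x`_i. -/
def fgen (i : Fin (2*n)) : Grass n :=
  ExteriorAlgebra.ι ℝ (Pi.single i (1:ℝ))

/-- The fermionic partial derivative ∂_{x`_i}, the odd derivation with
∂_{x`_i}(x`_j) = δ_{ij}: contraction with the i-th dual basis vector. -/
def fpderiv (i : Fin (2*n)) : Grass n →ₗ[ℝ] Grass n :=
  CliffordAlgebra.contractLeft (LinearMap.proj i)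

/-- The fermionic Laplace operator on Λ_{2n}. -/
def lapF : Grass n →ₗ[ℝ] Grass n :=
  (4:ℝ) • ∑ j : Fin n,
    (fpderiv n ⟨2*j.1, by omega⟩) ∘ₗ (fpderiv n ⟨2*j.1+1, by omega⟩)

/-- The bosonic Laplace operator Δ_b = −∑ ∂_{x_j}² on ℝ[x_1,…,x_m]. -/
def lapB : MvPolynomial (Fin m) ℝ →ₗ[ℝ] MvPolynomial (Fin m) ℝ :=
  - ∑ j : Fin m, (pderiv j).toLinearMap ∘ₗ (pderiv j).toLinearMap

/-- The super Laplace operator Δ = Δ_b + Δ_f on 𝒫. -/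
def lap : SuperPoly m n →ₗ[ℝ] SuperPoly m n :=
  LinearMap.rTensor (Grass n) (lapB m) + LinearMap.lTensor (MvPolynomial (Fin m) ℝ) (lapF n)

/-- x̲² = −∑ x_j². -/
def rb2 : MvPolynomial (Fin m) ℝ := - ∑ j : Fin m, (X j)^2

/-- x`² = ∑_{j=1}^n x`_{2j−1} x`_{2j}. -/
def rf2 : Grass n := ∑ j : Fin n, fgen n ⟨2*j.1, by omega⟩ * fgen n ⟨2*j.1+1, by omega⟩

/-- The generalized norm squared x² = x̲² + x`² as an element of 𝒫. -/
def r2 : SuperPoly m n := (rb2 m) ⊗ₜ 1 + 1 ⊗ₜ (rf2 n)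

/-- The grade-`i` part of the Grassmann algebra. -/
def fgrade (i : ℕ) : Submodule ℝ (Grass n) :=
  (LinearMap.range (ExteriorAlgebra.ι ℝ (M := Fin (2*n) → ℝ)))^i

/-- The space 𝒫_k of super-polynomials homogeneous of total degree k. -/
def P (k : ℕ) : Submodule ℝ (SuperPoly m n) :=
  ⨆ i : Fin (k+1), Submodule.map₂ (TensorProduct.mk ℝ _ _)
    (homogeneousSubmodule (Fin m) ℝ (k - i.1)) (fgrade n i.1)

/-- The space ℋ_k of spherical harmonics of degree k. -/
def H (k : ℕ) : Submodule ℝ (SuperPoly m n) :=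
  P m n k ⊓ LinearMap.ker (lap m n)

/-- The super-dimension M = m − 2n. -/
def sdim : ℤ := (m : ℤ) - 2*n

/-- x^{2i} ℋ_{k−2i} = {x^{2i} H : H ∈ ℋ_{k−2i}} as a subspace of 𝒫. -/
def fischerPiece (m n k i : ℕ) : Submodule ℝ (SuperPoly m n) :=
  Submodule.map (LinearMap.mulLeft ℝ ((r2 m n)^i)) (H m n (k - 2*i))

/-!
Write `R` for multiplication by `x²`. The bosonic and fermionic Euler identities give the
commutator `Δ (R ω) = R (Δ ω) + (2M + 4k) ω` for `ω ∈ 𝒫_k`; iterating it, for `h ∈ ℋ_j`,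
`Δ (x^{2(i+1)} h) = 2(i+1)(M + 2j + 2i) x^{2i} h`. So `Δ ∘ R` acts on every summand
`x^{2i} ℋ_{k-2i}` of `𝒫_k` by a scalar, which is nonzero because `M ∉ -2ℕ`. By induction on `k`
the decomposition of `𝒫_k` then makes `Δ ∘ R` bijective on `𝒫_k`, and this gives
`𝒫_{k+2} = ℋ_{k+2} ⊕ x² 𝒫_k`: a `p ∈ 𝒫_{k+2}` splits as `(p - R w) + R w` with `Δ (R w) = Δ p`.
-/

open Finset

variable {m n}

theorem iSup_fin_succ {α : Type*} [CompleteLattice α] {N : ℕ} (f : Fin (N + 1) → α) :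
    ⨆ i, f i = f 0 ⊔ ⨆ i : Fin N, f i.succ :=
  le_antisymm
    (iSup_le fun i => Fin.cases le_sup_left
      (fun j => le_sup_of_le_right (le_iSup (f ∘ Fin.succ) j)) i)
    (sup_le (le_iSup f 0) (iSup_le fun i => le_iSup f i.succ))

theorem iSupIndep_fin_succ {α : Type*} [CompleteLattice α] [IsModularLattice α] {N : ℕ}
    {f : Fin (N + 1) → α} (h₀ : Disjoint (f 0) (⨆ i : Fin N, f i.succ))
    (h : iSupIndep fun i : Fin N => f i.succ) : iSupIndep f := by
  classical
  rw [iSupIndep_iff_supIndep_univ] at h ⊢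
  rw [Fin.univ_succ, Finset.cons_eq_insert]
  refine (Finset.supIndep_map.mpr h).insert ?_
  rwa [Finset.sup_map, Finset.sup_univ_eq_iSup]

section Module

variable {K V W : Type*} [Field K] [AddCommGroup V] [Module K V] [AddCommGroup W] [Module K W]

theorem iSupIndep_map_of_injOn {ι : Type*} {p : ι → Submodule K V} (hp : iSupIndep p)
    {Q : Submodule K V} (hpQ : ∀ i, p i ≤ Q) {f : V →ₗ[K] W} (hf : Set.InjOn f Q) :
    iSupIndep fun i => (p i).map f := by
  intro i
  simp only [← Submodule.map_iSup, Submodule.disjoint_def]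
  rintro _ ⟨x, hx, rfl⟩ ⟨y, hy, hxy⟩
  have hyQ : y ∈ Q := iSup₂_le (fun j _ => hpQ j) hy
  obtain rfl := hf hyQ (hpQ i hx) hxy
  rw [Submodule.disjoint_def.mp (hp i) y hx hy, map_zero]

theorem eq_zero_of_mem_iSup_of_eq_smul {ι : Type*} {p : ι → Submodule K V} (hp : iSupIndep p)
    {T : V →ₗ[K] V} {μ : ι → K} (hμ : ∀ i, μ i ≠ 0) (hT : ∀ i, ∀ y ∈ p i, T y = μ i • y)
    {x : V} (hx : x ∈ ⨆ i, p i) (hTx : T x = 0) : x = 0 := by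
  obtain ⟨f, hf, rfl⟩ := (Submodule.mem_iSup_iff_exists_finsupp p x).mp hx
  have hμf : ∀ i ∈ f.support, μ i • f i = 0 := by
    refine (iSupIndep_iff_finsetSum_eq_zero_imp_eq_zero p).mp hp f.support (fun i => μ i • f i)
      (fun i _ => (p i).smul_mem _ (hf i)) ?_
    rw [← hTx, Finsupp.sum, map_sum]
    exact Finset.sum_congr rfl fun i _ => (hT i _ (hf i)).symm
  exact Finset.sum_eq_zero fun i hi => (smul_eq_zero.mp (hμf i hi)).resolve_left (hμ i)

theorem le_map_of_eq_smul {ι : Type*} {p : ι → Submodule K V}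
    {T : V →ₗ[K] V} {μ : ι → K} (hμ : ∀ i, μ i ≠ 0) (hT : ∀ i, ∀ y ∈ p i, T y = μ i • y) :
    ⨆ i, p i ≤ (⨆ i, p i).map T := by
  rw [Submodule.map_iSup]
  refine iSup_mono fun i y hy => ⟨(μ i)⁻¹ • y, (p i).smul_mem _ hy, ?_⟩
  rw [map_smul, hT i y hy, smul_smul, inv_mul_cancel₀ (hμ i), one_smul]

end Module

section Fischer

variable {K V : Type*} [Field K] [AddCommGroup V] [Module K V]
  {P : ℕ → Submodule K V} {Δ R : V →ₗ[K] V} {c : ℕ → K}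

def fischerSummand (P : ℕ → Submodule K V) (Δ R : V →ₗ[K] V) (k i : ℕ) : Submodule K V :=
  (P (k - 2 * i) ⊓ LinearMap.ker Δ).map (R ^ i)

theorem pow_apply_mem (hR : ∀ k, ∀ x ∈ P k, R x ∈ P (k + 2)) (a : ℕ) {k : ℕ} {x : V}
    (hx : x ∈ P k) : (R ^ a) x ∈ P (k + 2 * a) := by
  induction a with
  | zero => simpa using hx
  | succ a ih => simpa [pow_succ', Nat.mul_succ, ← add_assoc] using hR _ _ ih

theorem apply_pow_succ_apply_of_harmonic (hR : ∀ k, ∀ x ∈ P k, R x ∈ P (k + 2))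
    (hcomm : ∀ k, ∀ x ∈ P k, Δ (R x) = R (Δ x) + c k • x) {j : ℕ} {h : V}
    (hh : h ∈ P j ⊓ LinearMap.ker Δ) (a : ℕ) :
    Δ ((R ^ (a + 1)) h) = (∑ t ∈ range (a + 1), c (j + 2 * t)) • (R ^ a) h := by
  induction a with
  | zero => simp [hcomm j h hh.1, LinearMap.mem_ker.mp hh.2]
  | succ a ih =>
    rw [pow_succ', Module.End.mul_apply, hcomm _ _ (pow_apply_mem hR (a + 1) hh.1), ih, map_smul,
      ← Module.End.mul_apply, ← pow_succ', sum_range_succ (fun t => c (j + 2 * t)) (a + 1),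
      add_smul]

theorem apply_apply_of_mem_fischerSummand (hR : ∀ k, ∀ x ∈ P k, R x ∈ P (k + 2))
    (hcomm : ∀ k, ∀ x ∈ P k, Δ (R x) = R (Δ x) + c k • x) {k i : ℕ} {y : V}
    (hy : y ∈ fischerSummand P Δ R k i) :
    Δ (R y) = (∑ t ∈ range (i + 1), c (k - 2 * i + 2 * t)) • y := by
  obtain ⟨h, hh, rfl⟩ := hy
  rw [← Module.End.mul_apply R, ← pow_succ', apply_pow_succ_apply_of_harmonic hR hcomm hh]

theorem fischerSummand_zero (k : ℕ) : fischerSummand P Δ R k 0 = P k ⊓ LinearMap.ker Δ := by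
  simp [fischerSummand, Module.End.one_eq_id]

theorem fischerSummand_add_two_succ (k i : ℕ) :
    fischerSummand P Δ R (k + 2) (i + 1) = (fischerSummand P Δ R k i).map R := by
  rw [fischerSummand, fischerSummand, ← Submodule.map_comp, pow_succ', Module.End.mul_eq_comp,
    show k + 2 - 2 * (i + 1) = k - 2 * i by omega]

def IsFischerDecomposition (P : ℕ → Submodule K V) (Δ R : V →ₗ[K] V) (k : ℕ) : Prop :=
  P k = ⨆ i : Fin (k / 2 + 1), fischerSummand P Δ R k i ∧
    iSupIndep fun i : Fin (k / 2 + 1) => fischerSummand P Δ R k i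

theorem isFischerDecomposition_of_le_one (hΔ₀ : ∀ k ≤ 1, ∀ x ∈ P k, Δ x = 0) {k : ℕ}
    (hk : k ≤ 1) : IsFischerDecomposition P Δ R k := by
  rw [IsFischerDecomposition, show k / 2 + 1 = 1 by omega]
  refine ⟨?_, iSupIndep_subsingleton _⟩
  rw [iSup_unique, Fin.eq_zero default, Fin.val_zero, fischerSummand_zero, left_eq_inf]
  exact fun x hx => hΔ₀ k hk x hx

theorem IsFischerDecomposition.eq_zero_of_apply_apply_eq_zero
    (hR : ∀ k, ∀ x ∈ P k, R x ∈ P (k + 2)) (hcomm : ∀ k, ∀ x ∈ P k, Δ (R x) = R (Δ x) + c k • x)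
    (hc : ∀ j a, ∑ t ∈ range (a + 1), c (j + 2 * t) ≠ 0) {k : ℕ}
    (hk : IsFischerDecomposition P Δ R k) {x : V} (hx : x ∈ P k) (hΔRx : Δ (R x) = 0) : x = 0 :=
  eq_zero_of_mem_iSup_of_eq_smul (T := Δ ∘ₗ R) hk.2 (fun _ => hc _ _)
    (fun _ _ hy => apply_apply_of_mem_fischerSummand hR hcomm hy) (hk.1 ▸ hx) hΔRx

theorem IsFischerDecomposition.le_map_comp (hR : ∀ k, ∀ x ∈ P k, R x ∈ P (k + 2))
    (hcomm : ∀ k, ∀ x ∈ P k, Δ (R x) = R (Δ x) + c k • x)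
    (hc : ∀ j a, ∑ t ∈ range (a + 1), c (j + 2 * t) ≠ 0) {k : ℕ}
    (hk : IsFischerDecomposition P Δ R k) : P k ≤ (P k).map (Δ ∘ₗ R) :=
  hk.1 ▸ le_map_of_eq_smul (fun _ => hc _ _)
    (fun _ _ hy => apply_apply_of_mem_fischerSummand hR hcomm hy)

theorem sup_map_eq_of_le_map_comp (hR : ∀ k, ∀ x ∈ P k, R x ∈ P (k + 2))
    (hΔ : ∀ k, ∀ x ∈ P (k + 2), Δ x ∈ P k) {k : ℕ} (hk : P k ≤ (P k).map (Δ ∘ₗ R)) :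
    (P (k + 2) ⊓ LinearMap.ker Δ) ⊔ (P k).map R = P (k + 2) := by
  refine le_antisymm (sup_le inf_le_left (Submodule.map_le_iff_le_comap.mpr (hR k))) fun x hx => ?_
  obtain ⟨w, hw, hΔw⟩ := hk (hΔ k x hx)
  have hx' : x - R w ∈ P (k + 2) ⊓ LinearMap.ker Δ := by
    refine ⟨sub_mem hx (hR k w hw), ?_⟩
    rw [SetLike.mem_coe, LinearMap.mem_ker, map_sub, ← hΔw, LinearMap.comp_apply, sub_self]
  simpa using Submodule.add_mem_sup hx' (Submodule.mem_map_of_mem (f := R) hw)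

theorem IsFischerDecomposition.add_two (hR : ∀ k, ∀ x ∈ P k, R x ∈ P (k + 2))
    (hΔ : ∀ k, ∀ x ∈ P (k + 2), Δ x ∈ P k) (hcomm : ∀ k, ∀ x ∈ P k, Δ (R x) = R (Δ x) + c k • x)
    (hc : ∀ j a, ∑ t ∈ range (a + 1), c (j + 2 * t) ≠ 0) {k : ℕ}
    (hk : IsFischerDecomposition P Δ R k) : IsFischerDecomposition P Δ R (k + 2) := by
  have hinj {x : V} (hx : x ∈ P k) (hΔRx : Δ (R x) = 0) : x = 0 :=
    hk.eq_zero_of_apply_apply_eq_zero hR hcomm hc hx hΔRx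
  have hRinj : Set.InjOn R (P k) := fun x hx y hy hxy =>
    sub_eq_zero.mp (hinj (sub_mem hx hy) (by rw [map_sub, map_sub, hxy, sub_self]))
  have hdisj : Disjoint (P (k + 2) ⊓ LinearMap.ker Δ) ((P k).map R) := by
    rw [Submodule.disjoint_def]
    rintro _ ⟨-, hker⟩ ⟨w, hw, rfl⟩
    rw [hinj hw hker, map_zero]
  have hsummands :
      ⨆ i : Fin (k / 2 + 1), fischerSummand P Δ R (k + 2) i.succ = (P k).map R := by
    simp_rw [Fin.val_succ, fischerSummand_add_two_succ, ← Submodule.map_iSup, ← hk.1]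
  have hle (i : Fin (k / 2 + 1)) : fischerSummand P Δ R k i ≤ P k :=
    hk.1 ▸ le_iSup (fun i : Fin (k / 2 + 1) => fischerSummand P Δ R k i) i
  rw [IsFischerDecomposition, show (k + 2) / 2 = k / 2 + 1 by omega, iSup_fin_succ, Fin.val_zero,
    fischerSummand_zero, hsummands, sup_map_eq_of_le_map_comp hR hΔ (hk.le_map_comp hR hcomm hc)]
  refine ⟨rfl, iSupIndep_fin_succ (by rwa [Fin.val_zero, fischerSummand_zero, hsummands]) ?_⟩
  simp_rw [Fin.val_succ, fischerSummand_add_two_succ]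
  exact iSupIndep_map_of_injOn hk.2 hle hRinj

theorem isFischerDecomposition_of_commutator (hR : ∀ k, ∀ x ∈ P k, R x ∈ P (k + 2))
    (hΔ : ∀ k, ∀ x ∈ P (k + 2), Δ x ∈ P k) (hΔ₀ : ∀ k ≤ 1, ∀ x ∈ P k, Δ x = 0)
    (hcomm : ∀ k, ∀ x ∈ P k, Δ (R x) = R (Δ x) + c k • x)
    (hc : ∀ j a, ∑ t ∈ range (a + 1), c (j + 2 * t) ≠ 0) (k : ℕ) :
    IsFischerDecomposition P Δ R k := by
  induction k using Nat.twoStepInduction with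
  | zero => exact isFischerDecomposition_of_le_one hΔ₀ zero_le_one
  | one => exact isFischerDecomposition_of_le_one hΔ₀ le_rfl
  | more k ih _ => exact ih.add_two hR hΔ hcomm hc

end Fischer

theorem MvPolynomial.pderiv_eq_zero_of_isHomogeneous_zero {σ R : Type*} [CommSemiring R]
    {p : MvPolynomial σ R} (hp : p.IsHomogeneous 0) (j : σ) : pderiv j p = 0 := by
  rw [← totalDegree_zero_iff_isHomogeneous, totalDegree_eq_zero_iff_eq_C] at hp
  rw [hp, pderiv_C]

theorem lapB_apply (p : MvPolynomial (Fin m) ℝ) : lapB m p = -∑ j, pderiv j (pderiv j p) := by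
  simp [lapB, LinearMap.sum_apply]

theorem isHomogeneous_lapB {p : MvPolynomial (Fin m) ℝ} {d : ℕ} (hp : p.IsHomogeneous d) :
    (lapB m p).IsHomogeneous (d - 2) := by
  rw [lapB_apply, ← mem_homogeneousSubmodule]
  refine neg_mem (Submodule.sum_mem _ fun j _ => ?_)
  rw [mem_homogeneousSubmodule, show d - 2 = d - 1 - 1 by omega]
  exact (hp.pderiv (i := j)).pderiv

theorem lapB_eq_zero {p : MvPolynomial (Fin m) ℝ} {d : ℕ} (hp : p.IsHomogeneous d) (hd : d ≤ 1) :
    lapB m p = 0 := by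
  have hp' (j : Fin m) : (pderiv j p).IsHomogeneous 0 := by
    simpa [show d - 1 = 0 by omega] using hp.pderiv (i := j)
  simp [lapB_apply, fun j => pderiv_eq_zero_of_isHomogeneous_zero (hp' j) j]

theorem isHomogeneous_rb2 : (rb2 m).IsHomogeneous 2 :=
  (IsHomogeneous.sum _ _ _ fun j _ => isHomogeneous_X_pow j 2).neg

theorem pderiv_rb2 (j : Fin m) : pderiv j (rb2 m) = -(2 * X j) := by
  simp [rb2, pderiv_X, Pi.single_apply]

theorem pderiv_pderiv_rb2_mul (j : Fin m) (p : MvPolynomial (Fin m) ℝ) :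
    pderiv j (pderiv j (rb2 m * p)) =
      rb2 m * pderiv j (pderiv j p) - 2 * p - 4 * (X j * pderiv j p) := by
  have h2 : pderiv j (2 * X j : MvPolynomial (Fin m) ℝ) = 2 := by
    rw [← map_ofNat C 2, pderiv_C_mul, pderiv_X_self, mul_one]
  simp only [pderiv_mul, pderiv_rb2, map_add, map_neg, neg_mul, h2]
  ring

theorem lapB_rb2_mul {p : MvPolynomial (Fin m) ℝ} {d : ℕ} (hp : p.IsHomogeneous d) :
    lapB m (rb2 m * p) = rb2 m * lapB m p + (2 * (m : ℝ) + 4 * d) • p := by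
  simp only [lapB_apply, pderiv_pderiv_rb2_mul, sum_sub_distrib, ← mul_sum, sum_const, card_univ,
    Fintype.card_fin, hp.sum_X_mul_pderiv, smul_eq_C_mul, nsmul_eq_mul]
  simp only [map_add, map_mul, map_natCast, map_ofNat]
  ring

-- `evenIdx j`, `oddIdx j` are the paper's fermionic indices 2j+1, 2j+2 (`Fin` is 0-based).
def evenIdx (j : Fin n) : Fin (2 * n) := ⟨2 * j, by omega⟩

def oddIdx (j : Fin n) : Fin (2 * n) := ⟨2 * j + 1, by omega⟩

theorem evenIdx_injective : Function.Injective (evenIdx (n := n)) := fun i j h => by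
  simpa [evenIdx, Fin.ext_iff] using h

theorem oddIdx_injective : Function.Injective (oddIdx (n := n)) := fun i j h => by
  simpa [oddIdx, Fin.ext_iff] using h

theorem evenIdx_ne_oddIdx (i j : Fin n) : evenIdx i ≠ oddIdx j := fun h => by
  simp only [evenIdx, oddIdx, Fin.ext_iff] at h
  omega

theorem sum_fin_two_mul {A : Type*} [AddCommMonoid A] (f : Fin (2 * n) → A) :
    ∑ t, f t = ∑ j, (f (evenIdx j) + f (oddIdx j)) := by
  rw [← (finProdFinEquiv.trans (finCongr (Nat.mul_comm n 2))).sum_comp, Fintype.sum_prod_type]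
  refine sum_congr rfl fun j _ => ?_
  rw [Fin.sum_univ_two]
  congr 2 <;> ext <;> simp [finProdFinEquiv, evenIdx, oddIdx, mul_comm, add_comm]

theorem rf2_eq_sum : rf2 n = ∑ j, fgen n (evenIdx j) * fgen n (oddIdx j) := rfl

theorem lapF_apply (g : Grass n) :
    lapF n g = (4 : ℝ) • ∑ j, fpderiv n (evenIdx j) (fpderiv n (oddIdx j) g) := by
  simp [lapF, evenIdx, oddIdx, LinearMap.sum_apply]

theorem fpderiv_ι_mul (i : Fin (2 * n)) (v : Fin (2 * n) → ℝ) (g : Grass n) :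
    fpderiv n i (ExteriorAlgebra.ι ℝ v * g) = v i • g - ExteriorAlgebra.ι ℝ v * fpderiv n i g :=
  CliffordAlgebra.contractLeft_ι_mul _ _ _

theorem fpderiv_fgen_mul_self (i : Fin (2 * n)) (g : Grass n) :
    fpderiv n i (fgen n i * g) = g - fgen n i * fpderiv n i g := by
  simp [fgen, fpderiv_ι_mul]

theorem fpderiv_fgen_mul_of_ne {i t : Fin (2 * n)} (h : t ≠ i) (g : Grass n) :
    fpderiv n i (fgen n t * g) = -(fgen n t * fpderiv n i g) := by
  simp [fgen, fpderiv_ι_mul, h]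

theorem fgen_mul_ι_mul (i : Fin (2 * n)) (v : Fin (2 * n) → ℝ) (g : Grass n) :
    fgen n i * (ExteriorAlgebra.ι ℝ v * g) = -(ExteriorAlgebra.ι ℝ v * (fgen n i * g)) := by
  rw [← mul_assoc, fgen, eq_neg_of_add_eq_zero_left (ExteriorAlgebra.ι_add_mul_swap _ _), neg_mul,
    mul_assoc]

theorem sum_smul_fgen (v : Fin (2 * n) → ℝ) : ∑ i, v i • fgen n i = ExteriorAlgebra.ι ℝ v := by
  simp_rw [fgen, ← map_smul, ← map_sum]
  congr 1
  ext t
  simp [Pi.single_apply]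

theorem fgrade_succ (e : ℕ) :
    fgrade n (e + 1) = LinearMap.range (ExteriorAlgebra.ι ℝ (M := Fin (2 * n) → ℝ)) * fgrade n e :=
  pow_succ' _ _

theorem fpderiv_eq_zero_of_mem_fgrade_zero (i : Fin (2 * n)) {g : Grass n} (hg : g ∈ fgrade n 0) :
    fpderiv n i g = 0 := by
  obtain ⟨r, rfl⟩ := Submodule.mem_one.mp hg
  exact CliffordAlgebra.contractLeft_algebraMap _ _ _

theorem fpderiv_mem_fgrade (i : Fin (2 * n)) {e : ℕ} {g : Grass n} (hg : g ∈ fgrade n e) :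
    fpderiv n i g ∈ fgrade n (e - 1) := by
  induction e generalizing g with
  | zero => rw [fpderiv_eq_zero_of_mem_fgrade_zero i hg]; exact zero_mem _
  | succ e ih =>
    rw [fgrade_succ] at hg
    refine Submodule.mul_induction_on hg (fun x hx y hy => ?_) (fun x y hx hy => ?_)
    · obtain ⟨v, rfl⟩ := hx
      rw [fpderiv_ι_mul]
      refine sub_mem (Submodule.smul_mem _ _ hy) ?_
      rcases e with _ | e
      · rw [fpderiv_eq_zero_of_mem_fgrade_zero i hy, mul_zero]; exact zero_mem _
      · rw [Nat.add_sub_cancel, fgrade_succ]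
        exact Submodule.mul_mem_mul (LinearMap.mem_range_self _ v) (ih hy)
    · rw [map_add]; exact add_mem hx hy

theorem sum_fgen_mul_fpderiv {e : ℕ} {g : Grass n} (hg : g ∈ fgrade n e) :
    ∑ i, fgen n i * fpderiv n i g = (e : ℝ) • g := by
  induction e generalizing g with
  | zero => simp [fpderiv_eq_zero_of_mem_fgrade_zero _ hg]
  | succ e ih =>
    rw [fgrade_succ] at hg
    refine Submodule.mul_induction_on hg (fun x hx y hy => ?_) (fun x y hx hy => ?_)
    · obtain ⟨v, rfl⟩ := hx
      simp_rw [fpderiv_ι_mul, mul_sub, mul_smul_comm, fgen_mul_ι_mul, sum_sub_distrib,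
        sum_neg_distrib, ← mul_sum, ih hy, ← smul_mul_assoc, ← sum_mul, sum_smul_fgen]
      rw [mul_smul_comm, smul_mul_assoc]
      push_cast
      module
    · simp only [map_add, mul_add, sum_add_distrib, hx, hy, smul_add]

theorem lapF_mem_fgrade {e : ℕ} {g : Grass n} (hg : g ∈ fgrade n e) :
    lapF n g ∈ fgrade n (e - 2) := by
  rw [lapF_apply, show e - 2 = e - 1 - 1 by omega]
  exact Submodule.smul_mem _ _ (Submodule.sum_mem _ fun j _ =>
    fpderiv_mem_fgrade _ (fpderiv_mem_fgrade _ hg))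

theorem lapF_eq_zero {e : ℕ} (he : e ≤ 1) {g : Grass n} (hg : g ∈ fgrade n e) : lapF n g = 0 := by
  have hg' (j : Fin (2 * n)) : fpderiv n j g ∈ fgrade n 0 := by
    simpa [show e - 1 = 0 by omega] using fpderiv_mem_fgrade j hg
  simp [lapF_apply, fun i j => fpderiv_eq_zero_of_mem_fgrade_zero i (hg' j)]

theorem rf2_mem_fgrade : rf2 n ∈ fgrade n 2 := by
  rw [fgrade, pow_two]
  exact Submodule.sum_mem _ fun j _ =>
    Submodule.mul_mem_mul (LinearMap.mem_range_self _ _) (LinearMap.mem_range_self _ _)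

theorem fpderiv_pair_fgen_pair (i j : Fin n) (g : Grass n) :
    fpderiv n (evenIdx i) (fpderiv n (oddIdx i) (fgen n (evenIdx j) * (fgen n (oddIdx j) * g))) =
      fgen n (evenIdx j) * (fgen n (oddIdx j) * fpderiv n (evenIdx i) (fpderiv n (oddIdx i) g)) +
        if j = i then fgen n (evenIdx i) * fpderiv n (evenIdx i) g +
          fgen n (oddIdx i) * fpderiv n (oddIdx i) g - g else 0 := by
  split_ifs with hji
  · subst hji
    rw [fpderiv_fgen_mul_of_ne (evenIdx_ne_oddIdx j j), fpderiv_fgen_mul_self, mul_sub, map_neg,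
      map_sub, fpderiv_fgen_mul_self, fpderiv_fgen_mul_self,
      fpderiv_fgen_mul_of_ne (evenIdx_ne_oddIdx j j).symm]
    noncomm_ring
  · simp only [fpderiv_fgen_mul_of_ne (evenIdx_ne_oddIdx j i),
      fpderiv_fgen_mul_of_ne (oddIdx_injective.ne hji), fpderiv_fgen_mul_of_ne
      (evenIdx_injective.ne hji), fpderiv_fgen_mul_of_ne (evenIdx_ne_oddIdx i j).symm,
      mul_neg, neg_neg, add_zero]

theorem lapF_rf2_mul {e : ℕ} {g : Grass n} (hg : g ∈ fgrade n e) :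
    lapF n (rf2 n * g) = rf2 n * lapF n g + (4 * (e : ℝ) - 4 * n) • g := by
  have hpairs : ∑ i : Fin n, (fgen n (evenIdx i) * fpderiv n (evenIdx i) g +
      fgen n (oddIdx i) * fpderiv n (oddIdx i) g - g) = (e : ℝ) • g - (n : ℝ) • g := by
    rw [sum_sub_distrib, ← sum_fin_two_mul (fun t => fgen n t * fpderiv n t g),
      sum_fgen_mul_fpderiv hg, sum_const, card_univ, Fintype.card_fin,
      ← Nat.cast_smul_eq_nsmul ℝ n g]
  calc lapF n (rf2 n * g)
      = (4 : ℝ) • ∑ i, ∑ j, fpderiv n (evenIdx i) (fpderiv n (oddIdx i)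
          (fgen n (evenIdx j) * (fgen n (oddIdx j) * g))) := by
        rw [lapF_apply, rf2_eq_sum, sum_mul]
        simp only [mul_assoc, map_sum]
    _ = rf2 n * lapF n g + (4 : ℝ) • ∑ i : Fin n, (fgen n (evenIdx i) * fpderiv n (evenIdx i) g +
          fgen n (oddIdx i) * fpderiv n (oddIdx i) g - g) := by
        simp only [fpderiv_pair_fgen_pair, sum_add_distrib, sum_ite_eq', mem_univ, if_true,
          smul_add, lapF_apply, rf2_eq_sum, mul_smul_comm, sum_mul, mul_sum, mul_assoc]
    _ = rf2 n * lapF n g + (4 * (e : ℝ) - 4 * n) • g := by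
        rw [hpairs]
        module

theorem tmul_mem_P {k i : ℕ} (hik : i ≤ k) {p : MvPolynomial (Fin m) ℝ} {g : Grass n}
    (hp : p.IsHomogeneous (k - i)) (hg : g ∈ fgrade n i) : p ⊗ₜ[ℝ] g ∈ P m n k :=
  le_iSup (fun i : Fin (k + 1) => Submodule.map₂ (TensorProduct.mk ℝ _ _)
    (homogeneousSubmodule (Fin m) ℝ (k - i.1)) (fgrade n i.1)) ⟨i, by omega⟩
    (Submodule.apply_mem_map₂ _ hp hg)

theorem P_le_of_tmul_mem {k : ℕ} {C : Submodule ℝ (SuperPoly m n)}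
    (h : ∀ i ≤ k, ∀ p : MvPolynomial (Fin m) ℝ, p.IsHomogeneous (k - i) →
      ∀ g ∈ fgrade n i, p ⊗ₜ[ℝ] g ∈ C) : P m n k ≤ C :=
  iSup_le fun i => Submodule.map₂_le.mpr fun p hp g hg => h i (by omega) p hp g hg

theorem r2_mul_tmul (p : MvPolynomial (Fin m) ℝ) (g : Grass n) :
    r2 m n * (p ⊗ₜ[ℝ] g) = (rb2 m * p) ⊗ₜ[ℝ] g + p ⊗ₜ[ℝ] (rf2 n * g) := by
  rw [r2, add_mul, Algebra.TensorProduct.tmul_mul_tmul, Algebra.TensorProduct.tmul_mul_tmul,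
    one_mul, one_mul]

theorem lap_tmul (p : MvPolynomial (Fin m) ℝ) (g : Grass n) :
    lap m n (p ⊗ₜ[ℝ] g) = lapB m p ⊗ₜ[ℝ] g + p ⊗ₜ[ℝ] lapF n g := by
  simp [lap]

theorem r2_mul_mem_P {k : ℕ} {x : SuperPoly m n} (hx : x ∈ P m n k) :
    r2 m n * x ∈ P m n (k + 2) := by
  refine P_le_of_tmul_mem (C := (P m n (k + 2)).comap (LinearMap.mulLeft ℝ (r2 m n)))
    (fun i hik p hp g hg => ?_) hx
  rw [Submodule.mem_comap, LinearMap.mulLeft_apply, r2_mul_tmul]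
  refine add_mem (tmul_mem_P (by omega) ?_ hg) (tmul_mem_P (i := i + 2) (by omega) ?_ ?_)
  · rw [show k + 2 - i = 2 + (k - i) by omega]
    exact isHomogeneous_rb2.mul hp
  · rwa [show k + 2 - (i + 2) = k - i by omega]
  · rw [add_comm, fgrade, pow_add]
    exact Submodule.mul_mem_mul rf2_mem_fgrade hg

theorem lap_mem_P {k : ℕ} {x : SuperPoly m n} (hx : x ∈ P m n (k + 2)) : lap m n x ∈ P m n k := by
  refine P_le_of_tmul_mem (C := (P m n k).comap (lap m n)) (fun i hik p hp g hg => ?_) hx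
  rw [Submodule.mem_comap, lap_tmul]
  refine add_mem ?_ ?_
  · by_cases hik : i ≤ k
    · refine tmul_mem_P hik ?_ hg
      simpa [show k + 2 - i - 2 = k - i by omega] using isHomogeneous_lapB hp
    · rw [lapB_eq_zero hp (by omega), TensorProduct.zero_tmul]
      exact zero_mem _
  · by_cases hi : 2 ≤ i
    · refine tmul_mem_P (i := i - 2) (by omega) ?_ (lapF_mem_fgrade hg)
      rwa [show k - (i - 2) = k + 2 - i by omega]
    · rw [lapF_eq_zero (by omega) hg, TensorProduct.tmul_zero]
      exact zero_mem _

theorem lap_eq_zero_of_mem_P {k : ℕ} (hk : k ≤ 1) {x : SuperPoly m n} (hx : x ∈ P m n k) :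
    lap m n x = 0 := by
  refine P_le_of_tmul_mem (C := LinearMap.ker (lap m n)) (fun i hik p hp g hg => ?_) hx
  rw [LinearMap.mem_ker, lap_tmul, lapB_eq_zero hp (by omega), lapF_eq_zero (by omega) hg,
    TensorProduct.zero_tmul, TensorProduct.tmul_zero, add_zero]

theorem lap_r2_mul {k : ℕ} {x : SuperPoly m n} (hx : x ∈ P m n k) :
    lap m n (r2 m n * x) = r2 m n * lap m n x + (2 * (sdim m n : ℝ) + 4 * k) • x := by
  have hker : P m n k ≤ LinearMap.ker (lap m n ∘ₗ LinearMap.mulLeft ℝ (r2 m n) -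
      LinearMap.mulLeft ℝ (r2 m n) ∘ₗ lap m n - (2 * (sdim m n : ℝ) + 4 * k) • LinearMap.id) := by
    refine P_le_of_tmul_mem fun i hik p hp g hg => ?_
    simp only [LinearMap.mem_ker, LinearMap.sub_apply, LinearMap.comp_apply,
      LinearMap.mulLeft_apply, LinearMap.smul_apply, LinearMap.id_apply]
    rw [r2_mul_tmul, map_add, lap_tmul, lap_tmul, lap_tmul, mul_add, r2_mul_tmul, r2_mul_tmul,
      lapB_rb2_mul hp, lapF_rf2_mul hg]
    simp only [TensorProduct.add_tmul, TensorProduct.tmul_add, TensorProduct.tmul_smul,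
      ← TensorProduct.smul_tmul']
    rw [sdim, Nat.cast_sub hik]
    push_cast
    module
  have h := LinearMap.mem_ker.mp (hker hx)
  simp only [LinearMap.sub_apply, LinearMap.comp_apply, LinearMap.mulLeft_apply,
    LinearMap.smul_apply, LinearMap.id_apply] at h
  rwa [sub_sub, sub_eq_zero] at h

theorem sum_range_two_mul_add_four_mul (M : ℝ) (j a : ℕ) :
    ∑ t ∈ range (a + 1), (2 * M + 4 * ((j + 2 * t : ℕ) : ℝ)) =
      2 * (a + 1) * (M + 2 * (j + a : ℕ)) := by
  induction a with
  | zero => simp; ring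
  | succ a ih =>
    rw [sum_range_succ, ih]
    push_cast
    ring

theorem fischer_decomposition_general (m n : ℕ)
    (hM : ∀ j : ℕ, sdim m n ≠ -(2*(j:ℤ))) (k : ℕ) :
    P m n k = (⨆ i : Fin (k/2 + 1), fischerPiece m n k i.1) ∧
    iSupIndep (fun i : Fin (k/2 + 1) => fischerPiece m n k i.1) := by
  have hsummand (i : ℕ) : fischerPiece m n k i =
      fischerSummand (P m n) (lap m n) (LinearMap.mulLeft ℝ (r2 m n)) k i := by
    rw [fischerSummand, LinearMap.pow_mulLeft, fischerPiece, H]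
  have hc (j a : ℕ) :
      ∑ t ∈ range (a + 1), (2 * (sdim m n : ℝ) + 4 * ((j + 2 * t : ℕ) : ℝ)) ≠ 0 := by
    rw [sum_range_two_mul_add_four_mul]
    refine mul_ne_zero (by positivity) fun h => hM (j + a) ?_
    exact_mod_cast (eq_neg_of_add_eq_zero_left h)
  have hR : ∀ k, ∀ x ∈ P m n k, LinearMap.mulLeft ℝ (r2 m n) x ∈ P m n (k + 2) :=
    fun _ _ => r2_mul_mem_P
  have hcomm : ∀ k, ∀ x ∈ P m n k, lap m n (LinearMap.mulLeft ℝ (r2 m n) x) =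
      LinearMap.mulLeft ℝ (r2 m n) (lap m n x) + (2 * (sdim m n : ℝ) + 4 * k) • x :=
    fun _ _ => lap_r2_mul
  have hdec : IsFischerDecomposition (P m n) (lap m n) (LinearMap.mulLeft ℝ (r2 m n)) k :=
    isFischerDecomposition_of_commutator hR (fun _ _ => lap_mem_P)
      (fun _ hk _ => lap_eq_zero_of_mem_P hk) hcomm hc k
  simp only [hsummand]
  exact hdec

/-- Fischer decomposition in superspace: assume M ∉ {0, −2, −4, …}.  Then for
every k ≥ 0, 𝒫_k is the internal direct sum 𝒫_k = ⊕_{i=0}^{⌊k/2⌋} x^{2i} ℋ_{k−2i}. -/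
theorem fischer_decomposition (m n : ℕ) (hm : 1 ≤ m) (hn : 1 ≤ n)
    (hM : ∀ j : ℕ, sdim m n ≠ -(2*(j:ℤ))) (k : ℕ) :
    P m n k = (⨆ i : Fin (k/2 + 1), fischerPiece m n k i.1) ∧
    iSupIndep (fun i : Fin (k/2 + 1) => fischerPiece m n k i.1) :=
  fischer_decomposition_general m n hM k

end
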